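/- For η ∈ (0, 3/2) define ξ(η) = η·(1 + 2η²/9)^(−3/2), v(η) = 2η/3, z(η) = (4η²/3)/(1 − 4η²/9), w(η) = (2/3)·(1 + 2η²/9)^(3/2), A(η) = 1 − 4η²/9 and D(η) = (1 + 2η²/9)^(−1/2). Then for all η ∈ (0, 3/2) the following four identities hold (where ′ = d/dη): (i) ξ(η)·((−1 + D·w)·z)′(η) = −D(η)w(η)z(η)·ξ′(η); (ii) ξ(η)·(−1 + D(η)w(η))·w′(η) = [w(η) − D(η)·(w(η)² + (1 − ξ(η)²w(η)²)(1 − A(η))/(2ξ(η)²A(η)))]·ξ′(η); (iii) ξ(η)·A′(η) = (−z(η) + 1 − A(η))·ξ′(η); (iv) ξ(η)·D′(η) = [D(η)/(2A(η))]·(2(1 − A(η)) − (1 − v(η)²)·z(η))·ξ′(η). Equivalently, regarded as functions of ξ alone via the strictly increasing map η ↦ ξ(η), the quadruple (z, w, A, D) is a time-independent (stationary) solution of the pressureless STV PDE, with v = ξ·w. -/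

import Mathlib

open Real Set

/-- Schwarzschild similarity variable `ξ` of the critical Friedmann spacetime,
as a function of `η = r̄/t`. -/
noncomputable def xiF (η : ℝ) : ℝ := η * (1 + 2 * η ^ 2 / 9) ^ ((-3 : ℝ) / 2)

/-- SSC coordinate velocity `v` of the critical Friedmann spacetime. -/
noncomputable def vF (η : ℝ) : ℝ := 2 * η / 3

/-- Density variable `z = κρr̄²/(1 − v²)` of the critical Friedmann spacetime. -/
noncomputable def zF (η : ℝ) : ℝ := (4 * η ^ 2 / 3) / (1 - 4 * η ^ 2 / 9)

/-- Velocity variable `w = v/ξ` of the critical Friedmann spacetime. -/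
noncomputable def wF (η : ℝ) : ℝ := (2 / 3) * (1 + 2 * η ^ 2 / 9) ^ ((3 : ℝ) / 2)

/-- Metric component `A` of the critical Friedmann spacetime. -/
noncomputable def AF (η : ℝ) : ℝ := 1 - 4 * η ^ 2 / 9

/-- Metric variable `D = √(AB)` of the critical Friedmann spacetime. -/
noncomputable def DF (η : ℝ) : ℝ := (1 + 2 * η ^ 2 / 9) ^ ((-1 : ℝ) / 2)

/-! Write `u = 1 + 2η²/9` and `s = √u`. The rational powers in `ξ`, `w`, `D` are then `η/(u s)`,
`(2/3) u s` and `1/s`, and the η-derivatives of all five profiles are rational in `η` and `s`.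
Substituting them, each stationary STV equation becomes an identity of rational functions; the
relation `s² = u` is only needed when differentiating. -/

namespace Real

lemma rpow_three_halves {x : ℝ} (hx : 0 ≤ x) : x ^ ((3 : ℝ) / 2) = x * √x := by
  rw [show (3 : ℝ) / 2 = 1 + 1 / 2 by norm_num, rpow_add' hx (by norm_num), rpow_one,
    sqrt_eq_rpow]

lemma rpow_neg_one_half {x : ℝ} (hx : 0 ≤ x) : x ^ ((-1 : ℝ) / 2) = (√x)⁻¹ := by
  rw [show (-1 : ℝ) / 2 = -(1 / 2) by norm_num, rpow_neg hx, sqrt_eq_rpow]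

lemma rpow_neg_three_halves {x : ℝ} (hx : 0 ≤ x) : x ^ ((-3 : ℝ) / 2) = (x * √x)⁻¹ := by
  rw [show (-3 : ℝ) / 2 = -(3 / 2) by norm_num, rpow_neg hx, rpow_three_halves hx]

end Real

noncomputable def uF (η : ℝ) : ℝ := 1 + 2 * η ^ 2 / 9

lemma uF_pos (η : ℝ) : 0 < uF η := by unfold uF; positivity

lemma hasDerivAt_uF (η : ℝ) : HasDerivAt uF (4 * η / 9) η :=
  (((hasDerivAt_pow 2 η).const_mul (2 : ℝ)).div_const 9 |>.const_add 1).congr_deriv (by ring)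

lemma AF_eq (η : ℝ) : AF η = 3 - 2 * uF η := by unfold AF uF; ring

lemma xiF_eq : xiF = fun η => η / (uF η * √(uF η)) := by
  ext η
  change η * uF η ^ ((-3 : ℝ) / 2) = _
  rw [Real.rpow_neg_three_halves (uF_pos η).le, div_eq_mul_inv]

lemma wF_eq : wF = fun η => 2 / 3 * (uF η * √(uF η)) := by
  ext η
  change 2 / 3 * uF η ^ ((3 : ℝ) / 2) = _
  rw [Real.rpow_three_halves (uF_pos η).le]

lemma DF_eq : DF = fun η => (√(uF η))⁻¹ := by
  ext η
  change uF η ^ ((-1 : ℝ) / 2) = _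
  rw [Real.rpow_neg_one_half (uF_pos η).le]

lemma hasDerivAt_sqrt_uF (η : ℝ) :
    HasDerivAt (fun s => √(uF s)) (2 * η / 9 / √(uF η)) η :=
  ((hasDerivAt_uF η).sqrt (uF_pos η).ne').congr_deriv (by ring)

lemma hasDerivAt_xiF (η : ℝ) : HasDerivAt xiF (AF η / (uF η ^ 2 * √(uF η))) η := by
  have hu := uF_pos η
  have hden : HasDerivAt (fun s => uF s * √(uF s)) _ η :=
    (hasDerivAt_uF η).mul (hasDerivAt_sqrt_uF η)
  rw [xiF_eq]
  refine ((hasDerivAt_id η).div hden (by positivity)).congr_deriv ?_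
  rw [AF_eq, id]
  field_simp
  rw [Real.sq_sqrt hu.le]
  unfold uF
  ring

lemma hasDerivAt_wF (η : ℝ) : HasDerivAt wF (4 * η / 9 * √(uF η)) η := by
  have hu := uF_pos η
  rw [wF_eq]
  refine (((hasDerivAt_uF η).mul (hasDerivAt_sqrt_uF η)).const_mul (2 / 3 : ℝ)).congr_deriv ?_
  field_simp
  rw [Real.sq_sqrt hu.le, uF]
  ring

lemma hasDerivAt_DF (η : ℝ) : HasDerivAt DF (-(2 * η / 9) / (uF η * √(uF η))) η := by
  have hu := uF_pos η
  have hs := Real.sqrt_pos.2 hu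
  rw [DF_eq]
  refine ((hasDerivAt_sqrt_uF η).inv hs.ne').congr_deriv ?_
  field_simp
  rw [Real.sq_sqrt hu.le]

lemma hasDerivAt_AF (η : ℝ) : HasDerivAt AF (-(8 * η / 9)) η :=
  (((hasDerivAt_pow 2 η).const_mul (4 : ℝ)).div_const 9 |>.const_sub 1).congr_deriv (by ring)

lemma hasDerivAt_zF {η : ℝ} (hA : AF η ≠ 0) : HasDerivAt zF (8 * η / 3 / AF η ^ 2) η := by
  have hN := ((hasDerivAt_pow 2 η).const_mul (4 : ℝ)).div_const 3
  refine (hN.div (hasDerivAt_AF η) hA).congr_deriv ?_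
  unfold AF at hA ⊢
  field_simp
  ring

lemma zF_eq (η : ℝ) : zF η = 4 * η ^ 2 / 3 / AF η := rfl

section
variable {η : ℝ}

theorem friedmann_stv_z_eq (hA : AF η ≠ 0) :
    xiF η * deriv (fun s => (-1 + DF s * wF s) * zF s) η
      = -(DF η * wF η * zF η) * deriv xiF η := by
  have hu := uF_pos η
  have hflux : HasDerivAt (fun s => (-1 + DF s * wF s) * zF s) _ η :=
    (((hasDerivAt_DF η).mul (hasDerivAt_wF η)).const_add (-1)).mul (hasDerivAt_zF hA)
  rw [hflux.deriv, (hasDerivAt_xiF η).deriv]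
  simp only [Pi.mul_apply, xiF_eq, wF_eq, DF_eq, zF_eq]
  field_simp
  unfold AF uF
  ring

theorem friedmann_stv_w_eq (hη : η ≠ 0) (hA : AF η ≠ 0) :
    xiF η * (-1 + DF η * wF η) * deriv wF η
      = (wF η - DF η * ((wF η) ^ 2
          + (1 - (xiF η) ^ 2 * (wF η) ^ 2) * (1 - AF η) / (2 * (xiF η) ^ 2 * AF η)))
        * deriv xiF η := by
  have hu := uF_pos η
  rw [(hasDerivAt_wF η).deriv, (hasDerivAt_xiF η).deriv]
  simp only [xiF_eq, wF_eq, DF_eq]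
  field_simp
  unfold AF uF
  ring

theorem friedmann_stv_A_eq (hA : AF η ≠ 0) :
    xiF η * deriv AF η = (-zF η + 1 - AF η) * deriv xiF η := by
  have hu := uF_pos η
  rw [(hasDerivAt_AF η).deriv, (hasDerivAt_xiF η).deriv]
  simp only [xiF_eq, zF_eq]
  field_simp
  unfold AF uF
  ring

theorem friedmann_stv_D_eq (hA : AF η ≠ 0) :
    xiF η * deriv DF η
      = (DF η / (2 * AF η)) * (2 * (1 - AF η) - (1 - (vF η) ^ 2) * zF η) * deriv xiF η := by
  have hu := uF_pos η
  rw [(hasDerivAt_DF η).deriv, (hasDerivAt_xiF η).deriv]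
  simp only [xiF_eq, DF_eq, zF_eq, vF]
  field_simp
  unfold AF
  ring

theorem vF_eq_xiF_mul_wF : vF η = xiF η * wF η := by
  have hu := uF_pos η
  simp only [xiF_eq, wF_eq, vF]
  field_simp

end

/-- The critical (`k = 0`) pressureless Friedmann spacetime, parametrized by `η`,
is a stationary solution of the pressureless STV PDE: the four stationary STV
equations hold identically in `η` (with `d/dξ` converted to `d/dη` via the chain
rule), and `v = ξ w`. -/
theorem critical_Friedmann_stationary_STV (η : ℝ) (hη : η ∈ Ioo (0 : ℝ) (3 / 2)) :
    xiF η * deriv (fun s => (-1 + DF s * wF s) * zF s) η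
      = -(DF η * wF η * zF η) * deriv xiF η ∧
    xiF η * (-1 + DF η * wF η) * deriv wF η
      = (wF η - DF η * ((wF η) ^ 2
          + (1 - (xiF η) ^ 2 * (wF η) ^ 2) * (1 - AF η) / (2 * (xiF η) ^ 2 * AF η)))
        * deriv xiF η ∧
    xiF η * deriv AF η = (-zF η + 1 - AF η) * deriv xiF η ∧
    xiF η * deriv DF η
      = (DF η / (2 * AF η)) * (2 * (1 - AF η) - (1 - (vF η) ^ 2) * zF η)
        * deriv xiF η ∧
    vF η = xiF η * wF η := by
  obtain ⟨hpos, hlt⟩ := hη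
  have hA : AF η ≠ 0 := (show 0 < AF η by unfold AF; nlinarith).ne'
  exact ⟨friedmann_stv_z_eq hA, friedmann_stv_w_eq hpos.ne' hA, friedmann_stv_A_eq hA,
    friedmann_stv_D_eq hA, vF_eq_xiF_mul_wF⟩
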